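/- arXiv:2009.11828 — 7 statements merged into one kernel-verified Lean document; each statement's English description precedes it below -/
import Mathlib

section
/- Let M be a real p×k matrix with columns m_1,...,m_k, and let π_1,...,π_k be nonnegative real numbers with ∑_{t=1}^k π_t = 1 and π_t > 0 for all t. Then the k×k matrix diag(π_t^{-1} m_t^T m_t) − M^T M is positive semidefinite. -/
open Matrix BigOperators

/-!
At `x` the quadratic form of `diag(π_t⁻¹ ‖m_t‖²) − MᵀM` equals
`∑_i (∑_t (M_it x_t)² / π_t − (∑_t M_it x_t)²)`, and every row term is nonnegative by
Sedrakyan's form of Cauchy–Schwarz, `(∑_t a_t)² ≤ (∑_t π_t) ∑_t a_t² / π_t`,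
with `∑_t π_t = 1`.
-/

namespace Matrix

variable {m n : Type*} [Fintype n]

lemma dotProduct_diagonal_sub_transpose_mul_self_mulVec [Fintype m] [DecidableEq n] (d : n → ℝ)
    (M : Matrix m n ℝ) (x : n → ℝ) :
    x ⬝ᵥ ((diagonal d - Mᵀ * M) *ᵥ x) =
      ∑ t, d t * x t ^ 2 - (M *ᵥ x) ⬝ᵥ (M *ᵥ x) := by
  rw [sub_mulVec, dotProduct_sub, ← mulVec_mulVec, dotProduct_mulVec x Mᵀ, vecMul_transpose]
  congr 1
  simp only [dotProduct, mulVec_diagonal]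
  exact Finset.sum_congr rfl fun t _ => by ring

lemma sq_mulVec_apply_le_sum_sq_div (M : Matrix m n ℝ) {π : n → ℝ} (hπ : ∀ t, 0 < π t)
    (hπsum : ∑ t, π t = 1) (x : n → ℝ) (i : m) :
    (M *ᵥ x) i ^ 2 ≤ ∑ t, (M i t * x t) ^ 2 / π t := by
  have := Finset.sq_sum_div_le_sum_sq_div Finset.univ (fun t => M i t * x t) fun t _ => hπ t
  rwa [hπsum, div_one] at this

theorem posSemidef_diagonal_inv_mul_sub_transpose_mul_self [Fintype m] [DecidableEq n]
    (M : Matrix m n ℝ) {π : n → ℝ} (hπ : ∀ t, 0 < π t) (hπsum : ∑ t, π t = 1) :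
    (diagonal (fun t => (π t)⁻¹ * ((fun i => M i t) ⬝ᵥ (fun i => M i t))) -
      Mᵀ * M).PosSemidef := by
  refine .of_dotProduct_mulVec_nonneg
    ((isHermitian_diagonal _).sub (isHermitian_conjTranspose_mul_self M)) fun x => ?_
  have hdiag : ∑ t, (π t)⁻¹ * ((fun i => M i t) ⬝ᵥ (fun i => M i t)) * x t ^ 2
      = ∑ i, ∑ t, (M i t * x t) ^ 2 / π t := by
    rw [Finset.sum_comm]
    refine Finset.sum_congr rfl fun t _ => ?_
    simp only [dotProduct, Finset.mul_sum, Finset.sum_mul]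
    exact Finset.sum_congr rfl fun i _ => by ring
  rw [star_trivial, dotProduct_diagonal_sub_transpose_mul_self_mulVec, hdiag, sub_nonneg]
  simp only [dotProduct, ← sq]
  exact Finset.sum_le_sum fun i _ => sq_mulVec_apply_le_sum_sq_div M hπ hπsum x i

end Matrix

theorem stmt0_general (p k : ℕ) (M : Matrix (Fin p) (Fin k) ℝ) (π : Fin k → ℝ)
    (hπpos : ∀ t, 0 < π t) (hπsum : ∑ t, π t = 1) :
    (Matrix.diagonal (fun t => (π t)⁻¹ * ((fun i => M i t) ⬝ᵥ (fun i => M i t)))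
      - Mᵀ * M).PosSemidef :=
  posSemidef_diagonal_inv_mul_sub_transpose_mul_self M hπpos hπsum

/-- Lemma 1: diag(π_t⁻¹ mₜᵀmₜ) − MᵀM is positive semidefinite. -/
theorem stmt0 (p k : ℕ) (M : Matrix (Fin p) (Fin k) ℝ) (π : Fin k → ℝ)
    (hπ0 : ∀ t, 0 ≤ π t) (hπpos : ∀ t, 0 < π t) (hπsum : ∑ t, π t = 1) :
    (Matrix.diagonal (fun t => (π t)⁻¹ * ((fun i => M i t) ⬝ᵥ (fun i => M i t)))
      - Mᵀ * M).PosSemidef :=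
  stmt0_general p k M π hπpos hπsum
end

section
/- Let Σ be a symmetric positive definite p×p matrix, β_1,...,β_k, b_1,...,b_k ∈ ℝ^p, π_1,...,π_k > 0 with ∑π_t = 1. Let 𝔅 and B be the p×k matrices with columns β_t and b_t respectively. Then V(B) := diag(π_t^{-1}(β_t − b_t)^T Σ (β_t − b_t)) − (𝔅 − B)^T Σ (𝔅 − B) is positive semidefinite, and V(B) = 0 when B = 𝔅. -/
/-!
Write `d t = β t - b t` and `G = (𝔅 - B)ᵀ Σ (𝔅 - B)`, the Gram matrix of the `d t` in the
inner product given by `Σ`; its diagonal entries are `d tᵀ Σ d t`, so `V(B) = diag(G t t / π t) - G`.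
For any positive semidefinite `G` this matrix is positive semidefinite: writing `G` as a sum of
rank-one matrices `w wᵀ` reduces the claim to `(∑ x t * w t)² ≤ ∑ (x t * w t)² / π t`, which is
Sedrakyan's form of Cauchy–Schwarz because `∑ π t = 1`.
-/

open Matrix BigOperators

namespace Matrix

variable {n : Type*} [Fintype n] [DecidableEq n]

theorem posSemidef_diagonal_sq_div_sub_vecMulVec (w π : n → ℝ) (hπ : ∀ t, 0 < π t)
    (hsum : ∑ t, π t = 1) : (diagonal (fun t => w t ^ 2 / π t) - vecMulVec w w).PosSemidef := by
  refine .of_dotProduct_mulVec_nonneg ((isHermitian_diagonal _).sub ?_) fun x => ?_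
  · simpa using (posSemidef_vecMulVec_self_star w).isHermitian
  · have sedrakyan := Finset.sq_sum_div_le_sum_sq_div Finset.univ (fun t => x t * w t) fun t _ => hπ t
    rw [hsum, div_one] at sedrakyan
    have hdiag : x ⬝ᵥ diagonal (fun t => w t ^ 2 / π t) *ᵥ x = ∑ t, (x t * w t) ^ 2 / π t := by
      simp only [dotProduct, mulVec_diagonal]
      exact Finset.sum_congr rfl fun t _ => by ring
    have hrank : x ⬝ᵥ vecMulVec w w *ᵥ x = (∑ t, x t * w t) ^ 2 := by
      rw [vecMulVec_mulVec, dotProduct_smul, op_smul_eq_mul, dotProduct_comm w x, ← sq]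
      rfl
    simpa [sub_mulVec, hdiag, hrank] using sedrakyan

theorem PosSemidef.posSemidef_diagonal_div_sub {G : Matrix n n ℝ} (hG : G.PosSemidef) (π : n → ℝ)
    (hπ : ∀ t, 0 < π t) (hsum : ∑ t, π t = 1) :
    (diagonal (fun t => G t t / π t) - G).PosSemidef := by
  obtain ⟨m, v, rfl⟩ := posSemidef_iff_eq_sum_vecMulVec.mp hG
  convert posSemidef_sum Finset.univ
    fun i _ => posSemidef_diagonal_sq_div_sub_vecMulVec (v i) π hπ hsum using 1
  ext s t
  by_cases h : s = t
  · subst h; simp [sum_apply, vecMulVec_apply, sq, Finset.sum_div]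
  · simp [sum_apply, h]

end Matrix

/-- Key matrix inequality: V(B) := diag(πₜ⁻¹(βₜ−bₜ)ᵀΣ(βₜ−bₜ)) − (𝔅−B)ᵀΣ(𝔅−B) is PSD,
and V(𝔅) = 0. -/
theorem stmt2 (p k : ℕ) (S : Matrix (Fin p) (Fin p) ℝ) (hS : S.PosDef)
    (β b : Fin k → Fin p → ℝ) (π : Fin k → ℝ) (hπ : ∀ t, 0 < π t) (hsum : ∑ t, π t = 1)
    (Bβ Bb : Matrix (Fin p) (Fin k) ℝ)
    (hBβ : ∀ i t, Bβ i t = β t i) (hBb : ∀ i t, Bb i t = b t i) :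
    (Matrix.diagonal (fun t => (π t)⁻¹ * ((β t - b t) ⬝ᵥ S.mulVec (β t - b t))) -
      (Bβ - Bb)ᵀ * S * (Bβ - Bb)).PosSemidef ∧
    (b = β →
      Matrix.diagonal (fun t => (π t)⁻¹ * ((β t - b t) ⬝ᵥ S.mulVec (β t - b t))) -
        (Bβ - Bb)ᵀ * S * (Bβ - Bb) = 0) := by
  have hcol : ∀ t, (Bβ - Bb)ᵀ t = β t - b t := fun t => funext fun i => by
    simp [hBβ, hBb]
  have hG : ((Bβ - Bb)ᵀ * S * (Bβ - Bb)).PosSemidef := by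
    simpa using hS.posSemidef.conjTranspose_mul_mul_same (Bβ - Bb)
  have hGdiag : ∀ t, ((Bβ - Bb)ᵀ * S * (Bβ - Bb)) t t = (β t - b t) ⬝ᵥ S *ᵥ (β t - b t) := by
    intro t
    rw [Matrix.mul_assoc, mul_apply', ← hcol]
    rfl
  constructor
  · simpa only [hGdiag, inv_mul_eq_div] using hG.posSemidef_diagonal_div_sub π hπ hsum
  · rintro rfl
    have hzero : Bβ - Bb = 0 := by
      ext i t
      simp [hBβ, hBb]
    simp [hzero]
end

section
/- Let Σ be a symmetric positive semidefinite p×p matrix, β_t, β_s ∈ ℝ^p, and π_t, π_s > 0 with π_t + π_s ≤ 1. Then π_t^{-1} β_t^T Σ β_t + π_s^{-1} β_s^T Σ β_s − (β_t − β_s)^T Σ (β_t − β_s) = (π_t π_s (π_t + π_s))^{-1} (π_s β_t + π_t β_s)^T Σ (π_s β_t + π_t β_s) + ((1 − π_t − π_s)/(π_t + π_s)) (β_t − β_s)^T Σ (β_t − β_s). -/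
open Matrix

/-! Expand through the polar form: `Q (b • x + a • y) = b² Q x + a² Q y + a b polar Q x y` and
`Q (x - y) = Q x + Q y - polar Q x y`. The polar terms on the two sides match, and the
coefficients of `Q x` and `Q y` agree once denominators are cleared. -/

namespace QuadraticMap

variable {K M : Type*} [Field K] [AddCommGroup M] [Module K M]

theorem map_sub_eq_sub_polar (Q : QuadraticForm K M) (x y : M) :
    Q (x - y) = Q x + Q y - polar Q x y := by
  rw [sub_eq_add_neg, QuadraticMap.map_add Q, QuadraticMap.map_neg, polar_neg_right]
  ring

theorem inv_mul_add_inv_mul_sub_map_sub (Q : QuadraticForm K M) {a b : K} (ha : a ≠ 0)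
    (hb : b ≠ 0) (hab : a + b ≠ 0) (x y : M) :
    a⁻¹ * Q x + b⁻¹ * Q y - Q (x - y)
      = (a * b * (a + b))⁻¹ * Q (b • x + a • y) + ((1 - a - b) / (a + b)) * Q (x - y) := by
  rw [QuadraticMap.map_add Q, QuadraticMap.map_smul, QuadraticMap.map_smul, polar_smul_left,
    polar_smul_right, map_sub_eq_sub_polar]
  simp only [smul_eq_mul]
  field_simp
  ring

end QuadraticMap

theorem stmt3_general (p : ℕ) (S : Matrix (Fin p) (Fin p) ℝ)
    (βt βs : Fin p → ℝ) (πt πs : ℝ) (hπt : 0 < πt) (hπs : 0 < πs) :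
    πt⁻¹ * (βt ⬝ᵥ S.mulVec βt) + πs⁻¹ * (βs ⬝ᵥ S.mulVec βs)
        - (βt - βs) ⬝ᵥ S.mulVec (βt - βs)
      = (πt * πs * (πt + πs))⁻¹ *
          ((πs • βt + πt • βs) ⬝ᵥ S.mulVec (πs • βt + πt • βs))
        + ((1 - πt - πs) / (πt + πs)) * ((βt - βs) ⬝ᵥ S.mulVec (βt - βs)) := by
  have hform (v : Fin p → ℝ) : v ⬝ᵥ S.mulVec v = S.toQuadraticForm' v := by
    simp [toQuadraticForm', toLinearMap₂'_apply']
  simp only [hform]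
  exact S.toQuadraticForm'.inv_mul_add_inv_mul_sub_map_sub hπt.ne' hπs.ne' (by positivity) βt βs

/-- Algebraic identity decomposing the ANHECOVA-over-ANOVA efficiency gain. -/
theorem stmt3 (p : ℕ) (S : Matrix (Fin p) (Fin p) ℝ) (hS : S.PosSemidef)
    (βt βs : Fin p → ℝ) (πt πs : ℝ) (hπt : 0 < πt) (hπs : 0 < πs) (hsum : πt + πs ≤ 1) :
    πt⁻¹ * (βt ⬝ᵥ S.mulVec βt) + πs⁻¹ * (βs ⬝ᵥ S.mulVec βs)
        - (βt - βs) ⬝ᵥ S.mulVec (βt - βs)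
      = (πt * πs * (πt + πs))⁻¹ *
          ((πs • βt + πt • βs) ⬝ᵥ S.mulVec (πs • βt + πt • βs))
        + ((1 - πt - πs) / (πt + πs)) * ((βt - βs) ⬝ᵥ S.mulVec (βt - βs)) :=
  stmt3_general p S βt βs πt πs hπt hπs
end

section
/- Let Σ be a symmetric positive semidefinite p×p matrix, β_t, β_s ∈ ℝ^p, and π_t, π_s > 0 with π_t + π_s ≤ 1. Then π_t^{-1} β_t^T Σ β_t + π_s^{-1} β_s^T Σ β_s ≥ (β_t − β_s)^T Σ (β_t − β_s), with equality (when Σ is positive definite) if and only if π_s β_t + π_t β_s = 0 and (1 − π_t − π_s)(β_t − β_s) = 0. -/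
/-!
Multiplying the gap `πt⁻¹ Q(βt) + πs⁻¹ Q(βs) - Q(βt - βs)` (with `Q(x) = xᵀ Σ x`) by `πt πs`
gives exactly `Q(πs βt + πt βs) + (1 - πt - πs) (πs Q(βt) + πt Q(βs))`, a sum of two nonnegative
terms. So the gap is nonnegative, and it vanishes iff both terms do; for positive definite `Σ`
this is the stated condition on the vectors.
-/

open Matrix

namespace Matrix

variable {n : Type*}

theorem PosSemidef.isSymm {R : Type*} [Ring R] [PartialOrder R] [StarRing R] [TrivialStar R]
    {S : Matrix n n R} (hS : S.PosSemidef) : S.IsSymm :=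
  isHermitian_iff_isSymm.mp hS.isHermitian

variable [Fintype n]

theorem IsSymm.dotProduct_mulVec_comm {R : Type*} [CommSemiring R] {S : Matrix n n R}
    (hS : S.IsSymm) (x y : n → R) : x ⬝ᵥ S *ᵥ y = y ⬝ᵥ S *ᵥ x := by
  rw [← dotProduct_transpose_mulVec, hS.eq]

theorem IsSymm.weighted_quadratic_form_identity {R : Type*} [CommRing R] {S : Matrix n n R}
    (hS : S.IsSymm) (x y : n → R) (a b : R) :
    b * (x ⬝ᵥ S *ᵥ x) + a * (y ⬝ᵥ S *ᵥ y) - a * b * ((x - y) ⬝ᵥ S *ᵥ (x - y)) =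
      (b • x + a • y) ⬝ᵥ S *ᵥ (b • x + a • y) +
        (1 - a - b) * (b * (x ⬝ᵥ S *ᵥ x) + a * (y ⬝ᵥ S *ᵥ y)) := by
  simp only [mulVec_sub, mulVec_add, mulVec_smul, dotProduct_sub, sub_dotProduct,
    dotProduct_add, add_dotProduct, dotProduct_smul, smul_dotProduct, smul_eq_mul,
    hS.dotProduct_mulVec_comm y x]
  ring

variable {R : Type*} [Field R] {S : Matrix n n R} {x y : n → R} {a b : R}

theorem IsSymm.mul_mul_inv_mul_add_inv_mul_sub (hS : S.IsSymm) (ha : a ≠ 0) (hb : b ≠ 0) :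
    a * b * (a⁻¹ * (x ⬝ᵥ S *ᵥ x) + b⁻¹ * (y ⬝ᵥ S *ᵥ y) - (x - y) ⬝ᵥ S *ᵥ (x - y)) =
      (b • x + a • y) ⬝ᵥ S *ᵥ (b • x + a • y) +
        (1 - a - b) * (b * (x ⬝ᵥ S *ᵥ x) + a * (y ⬝ᵥ S *ᵥ y)) := by
  rw [← hS.weighted_quadratic_form_identity]
  field_simp

variable [LinearOrder R] [StarRing R] [TrivialStar R]

theorem PosSemidef.dotProduct_mulVec_self_nonneg (hS : S.PosSemidef) (x : n → R) :
    0 ≤ x ⬝ᵥ S *ᵥ x := by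
  simpa using hS.dotProduct_mulVec_nonneg x

theorem PosDef.dotProduct_mulVec_self_eq_zero_iff (hS : S.PosDef) :
    x ⬝ᵥ S *ᵥ x = 0 ↔ x = 0 := by
  refine ⟨fun h => by_contra fun hx => ?_, fun h => by simp [h]⟩
  exact (by simpa using hS.dotProduct_mulVec_pos hx : 0 < x ⬝ᵥ S *ᵥ x).ne' h

variable [IsStrictOrderedRing R]

theorem PosSemidef.weighted_sum_dotProduct_mulVec_nonneg (hS : S.PosSemidef) (ha : 0 ≤ a)
    (hb : 0 ≤ b) : 0 ≤ b * (x ⬝ᵥ S *ᵥ x) + a * (y ⬝ᵥ S *ᵥ y) :=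
  add_nonneg (mul_nonneg hb (hS.dotProduct_mulVec_self_nonneg x))
    (mul_nonneg ha (hS.dotProduct_mulVec_self_nonneg y))

theorem PosSemidef.dotProduct_mulVec_sub_le (hS : S.PosSemidef) (ha : 0 < a) (hb : 0 < b)
    (hab : a + b ≤ 1) :
    (x - y) ⬝ᵥ S *ᵥ (x - y) ≤ a⁻¹ * (x ⬝ᵥ S *ᵥ x) + b⁻¹ * (y ⬝ᵥ S *ᵥ y) := by
  have hgap := hS.isSymm.mul_mul_inv_mul_add_inv_mul_sub (x := x) (y := y) ha.ne' hb.ne'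
  have hrhs : 0 ≤ a * b * (a⁻¹ * (x ⬝ᵥ S *ᵥ x) + b⁻¹ * (y ⬝ᵥ S *ᵥ y) -
      (x - y) ⬝ᵥ S *ᵥ (x - y)) := hgap ▸ add_nonneg (hS.dotProduct_mulVec_self_nonneg _)
    (mul_nonneg (by linarith) (hS.weighted_sum_dotProduct_mulVec_nonneg ha.le hb.le))
  exact sub_nonneg.mp (nonneg_of_mul_nonneg_right hrhs (mul_pos ha hb))

theorem PosSemidef.dotProduct_mulVec_sub_eq_iff (hS : S.PosSemidef) (ha : 0 < a) (hb : 0 < b)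
    (hab : a + b ≤ 1) :
    (x - y) ⬝ᵥ S *ᵥ (x - y) = a⁻¹ * (x ⬝ᵥ S *ᵥ x) + b⁻¹ * (y ⬝ᵥ S *ᵥ y) ↔
      (b • x + a • y) ⬝ᵥ S *ᵥ (b • x + a • y) = 0 ∧
        (1 - a - b) * (b * (x ⬝ᵥ S *ᵥ x) + a * (y ⬝ᵥ S *ᵥ y)) = 0 := by
  rw [← add_eq_zero_iff_of_nonneg (hS.dotProduct_mulVec_self_nonneg _)
      (mul_nonneg (by linarith) (hS.weighted_sum_dotProduct_mulVec_nonneg ha.le hb.le)),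
    ← hS.isSymm.mul_mul_inv_mul_add_inv_mul_sub ha.ne' hb.ne',
    mul_eq_zero_iff_left (mul_pos ha hb).ne', sub_eq_zero, eq_comm]

theorem PosDef.weighted_sum_dotProduct_mulVec_eq_zero_iff (hS : S.PosDef) (ha : 0 < a)
    (hb : 0 < b) : b * (x ⬝ᵥ S *ᵥ x) + a * (y ⬝ᵥ S *ᵥ y) = 0 ↔ x = 0 ∧ y = 0 := by
  have hS' := hS.posSemidef
  rw [add_eq_zero_iff_of_nonneg (mul_nonneg hb.le (hS'.dotProduct_mulVec_self_nonneg x))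
      (mul_nonneg ha.le (hS'.dotProduct_mulVec_self_nonneg y)),
    mul_eq_zero_iff_left hb.ne', mul_eq_zero_iff_left ha.ne',
    hS.dotProduct_mulVec_self_eq_zero_iff, hS.dotProduct_mulVec_self_eq_zero_iff]

end Matrix

theorem sub_eq_zero_iff_of_smul_add_smul_eq_zero {K V : Type*} [Field K] [AddCommGroup V]
    [Module K V] {a b : K} {x y : V} (hab : a + b ≠ 0) (h : b • x + a • y = 0) :
    x - y = 0 ↔ x = 0 ∧ y = 0 := by
  refine ⟨fun hxy => ?_, fun ⟨hx, hy⟩ => by rw [hx, hy, sub_zero]⟩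
  rw [sub_eq_zero] at hxy
  subst hxy
  rw [← add_smul, add_comm, smul_eq_zero] at h
  exact ⟨h.resolve_left hab, h.resolve_left hab⟩

/-- Quadratic form inequality comparing ANOVA and ANHECOVA contrast variances, with
equality characterization when Σ is positive definite. -/
theorem stmt4 (p : ℕ) (S : Matrix (Fin p) (Fin p) ℝ) (hS : S.PosSemidef)
    (βt βs : Fin p → ℝ) (πt πs : ℝ) (hπt : 0 < πt) (hπs : 0 < πs) (hsum : πt + πs ≤ 1) :
    ((βt - βs) ⬝ᵥ S.mulVec (βt - βs)
        ≤ πt⁻¹ * (βt ⬝ᵥ S.mulVec βt) + πs⁻¹ * (βs ⬝ᵥ S.mulVec βs)) ∧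
    (S.PosDef →
      ((βt - βs) ⬝ᵥ S.mulVec (βt - βs)
          = πt⁻¹ * (βt ⬝ᵥ S.mulVec βt) + πs⁻¹ * (βs ⬝ᵥ S.mulVec βs)
        ↔ πs • βt + πt • βs = 0 ∧ (1 - πt - πs) • (βt - βs) = 0)) := by
  refine ⟨hS.dotProduct_mulVec_sub_le hπt hπs hsum, fun hPD => ?_⟩
  rw [hS.dotProduct_mulVec_sub_eq_iff hπt hπs hsum, hPD.dotProduct_mulVec_self_eq_zero_iff,
    mul_eq_zero, hPD.weighted_sum_dotProduct_mulVec_eq_zero_iff hπt hπs, smul_eq_zero]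
  exact and_congr_right fun hv =>
    or_congr_right (sub_eq_zero_iff_of_smul_add_smul_eq_zero (by positivity) hv).symm
end

section
/- Suppose (Y^{(t)}, X, A) satisfies: A takes values in the standard basis vectors a_1,...,a_k of ℝ^k, A is independent of (Y^{(1)},...,Y^{(k)}, X), P(A = a_t) = π_t > 0, the observed response is Y = ∑_t Y^{(t)} I(A = a_t), and all variables are square-integrable with var(X) = Σ_X positive definite. Then the minimizer (ϑ, b) of E[(Y − ϑ^T A − b^T (X − μ_X))²] over ϑ ∈ ℝ^k, b ∈ ℝ^p is unique and given by ϑ_t = E(Y^{(t)}) for each t and b = ∑_{t=1}^k π_t β_t, where β_t = Σ_X^{-1} cov(X, Y^{(t)}) and μ_X = E(X). -/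
/-!
The regressors `I(T = t)` and `Xᵢ - E Xᵢ` have the block-diagonal second-moment matrix
`diag π ⊕ Σ_X`: by independence of `T` and `X`, the cross moments are `π_t E(Xᵢ - E Xᵢ) = 0`.
Independence also gives `E[I(T = t) Y] = π_t E Y⁽ᵗ⁾` and `E[(Xᵢ - E Xᵢ) Y] = ∑ₜ π_t cov(Xᵢ, Y⁽ᵗ⁾)`,
so `(θ, ∑ π_t β_t)` solves the normal equations. By Pythagoras in `L²` the risk of any `(ϑ, b)`
exceeds the risk at this point by the quadratic form of the positive definite matrix
`diag π ⊕ Σ_X` evaluated at the difference.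
-/

open Matrix MeasureTheory BigOperators

theorem Matrix.PosDef.fromBlocks_zero {m n R : Type*} [Fintype m] [Fintype n] [Ring R]
    [PartialOrder R] [StarRing R] [StarOrderedRing R]
    {A : Matrix m m R} {D : Matrix n n R} (hA : A.PosDef) (hD : D.PosDef) :
    (fromBlocks A 0 0 D).PosDef := by
  refine .of_dotProduct_mulVec_pos (hA.isHermitian.fromBlocks (by simp) hD.isHermitian)
    fun x hx => ?_
  rw [fromBlocks_mulVec, dotProduct_block]
  simp only [zero_mulVec, add_zero, zero_add, Sum.elim_comp_inl, Sum.elim_comp_inr]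
  have hA' := hA.posSemidef.dotProduct_mulVec_nonneg (x ∘ Sum.inl)
  have hD' := hD.posSemidef.dotProduct_mulVec_nonneg (x ∘ Sum.inr)
  by_cases hl : x ∘ Sum.inl = 0
  · have hr : x ∘ Sum.inr ≠ 0 := fun hr =>
      hx (by ext (i | i); exacts [congrFun hl i, congrFun hr i])
    exact add_pos_of_nonneg_of_pos hA' (hD.dotProduct_mulVec_pos hr)
  · exact add_pos_of_pos_of_nonneg (hA.dotProduct_mulVec_pos hl) hD'

theorem MeasureTheory.MemLp.integrable_fun_mul {Ω : Type*} [MeasurableSpace Ω] {μ : Measure Ω}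
    {f g : Ω → ℝ} (hf : MemLp f 2 μ) (hg : MemLp g 2 μ) :
    Integrable (fun ω => f ω * g ω) μ :=
  hf.integrable_mul hg

noncomputable def secondMomentMatrix {Ω ι : Type*} [MeasurableSpace Ω] (μ : Measure Ω)
    (Z : ι → Ω → ℝ) : Matrix ι ι ℝ :=
  fun i j => ∫ ω, Z i ω * Z j ω ∂μ

section LeastSquares

variable {Ω ι : Type*} [MeasurableSpace Ω] {μ : Measure Ω} [Fintype ι] {Z : ι → Ω → ℝ}

theorem memLp_sum_smul (hZ : ∀ i, MemLp (Z i) 2 μ) (v : ι → ℝ) :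
    MemLp (fun ω => ∑ i, v i * Z i ω) 2 μ :=
  memLp_finsetSum _ fun i _ => (hZ i).const_mul (v i)

theorem integral_sum_smul_mul (hZ : ∀ i, MemLp (Z i) 2 μ) {f : Ω → ℝ} (hf : MemLp f 2 μ)
    (v : ι → ℝ) :
    ∫ ω, (∑ i, v i * Z i ω) * f ω ∂μ = ∑ i, v i * ∫ ω, Z i ω * f ω ∂μ := by
  simp_rw [Finset.sum_mul, mul_assoc]
  rw [integral_finsetSum _ fun i _ => ((hZ i).integrable_fun_mul hf).const_mul (v i)]
  simp_rw [integral_const_mul]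

theorem integral_mul_sum_smul (hZ : ∀ i, MemLp (Z i) 2 μ) (v : ι → ℝ) (i : ι) :
    ∫ ω, Z i ω * ∑ j, v j * Z j ω ∂μ = (secondMomentMatrix μ Z *ᵥ v) i := by
  simp_rw [mul_comm (Z i _)]
  rw [integral_sum_smul_mul hZ (hZ i)]
  refine Finset.sum_congr rfl fun j _ => ?_
  simp only [secondMomentMatrix, mul_comm (Z i _), mul_comm (v j)]

theorem integral_sum_smul_sq (hZ : ∀ i, MemLp (Z i) 2 μ) (v : ι → ℝ) :
    ∫ ω, (∑ i, v i * Z i ω) ^ 2 ∂μ = v ⬝ᵥ secondMomentMatrix μ Z *ᵥ v := by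
  simp_rw [sq]
  rw [integral_sum_smul_mul hZ (memLp_sum_smul hZ v)]
  simp only [integral_mul_sum_smul hZ, dotProduct]

/-- Pythagoras in `L²`: the normal equations make the residual `Y - ∑ wᵢ Zᵢ` orthogonal to
every `Zᵢ`. -/
theorem integral_sub_sum_smul_sq (hZ : ∀ i, MemLp (Z i) 2 μ) {Y : Ω → ℝ} (hY : MemLp Y 2 μ)
    {w : ι → ℝ} (hw : ∀ i, ∫ ω, Z i ω * Y ω ∂μ = (secondMomentMatrix μ Z *ᵥ w) i)
    (v : ι → ℝ) :
    ∫ ω, (Y ω - ∑ i, v i * Z i ω) ^ 2 ∂μ =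
      ∫ ω, (Y ω - ∑ i, w i * Z i ω) ^ 2 ∂μ + (v - w) ⬝ᵥ secondMomentMatrix μ Z *ᵥ (v - w) := by
  set r := fun ω => Y ω - ∑ i, w i * Z i ω
  set u := fun ω => ∑ i, (v - w) i * Z i ω
  have hr : MemLp r 2 μ := hY.sub (memLp_sum_smul hZ w)
  have hu : MemLp u 2 μ := memLp_sum_smul hZ (v - w)
  have horth : ∫ ω, u ω * r ω ∂μ = 0 := by
    have hZr : ∀ i, ∫ ω, Z i ω * r ω ∂μ = 0 := fun i => by
      simp_rw [r, mul_sub]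
      rw [integral_sub ((hZ i).integrable_fun_mul hY)
          ((hZ i).integrable_fun_mul (memLp_sum_smul hZ w)), hw, integral_mul_sum_smul hZ,
        sub_self]
    simp [u, integral_sum_smul_mul hZ hr, hZr]
  have hexpand : ∀ ω, (Y ω - ∑ i, v i * Z i ω) ^ 2 = r ω ^ 2 - 2 * (u ω * r ω) + u ω ^ 2 := by
    intro ω
    have : ∑ i, v i * Z i ω = ∑ i, w i * Z i ω + u ω := by
      simp [u, sub_mul, Finset.sum_sub_distrib]
    rw [this]
    ring
  have hur : Integrable (fun ω => 2 * (u ω * r ω)) μ := (hu.integrable_fun_mul hr).const_mul 2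
  have hrur : Integrable (fun ω => r ω ^ 2 - 2 * (u ω * r ω)) μ := hr.integrable_sq.sub hur
  simp_rw [hexpand]
  rw [integral_add hrur hu.integrable_sq,
    integral_sub hr.integrable_sq hur, integral_const_mul, horth, integral_sum_smul_sq hZ]
  ring

theorem integral_sub_sum_smul_sq_le (hZ : ∀ i, MemLp (Z i) 2 μ) {Y : Ω → ℝ} (hY : MemLp Y 2 μ)
    {w : ι → ℝ} (hw : ∀ i, ∫ ω, Z i ω * Y ω ∂μ = (secondMomentMatrix μ Z *ᵥ w) i)
    (hM : (secondMomentMatrix μ Z).PosSemidef) (v : ι → ℝ) :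
    ∫ ω, (Y ω - ∑ i, w i * Z i ω) ^ 2 ∂μ ≤ ∫ ω, (Y ω - ∑ i, v i * Z i ω) ^ 2 ∂μ := by
  rw [integral_sub_sum_smul_sq hZ hY hw v, le_add_iff_nonneg_right]
  simpa using hM.dotProduct_mulVec_nonneg (v - w)

theorem eq_of_integral_sub_sum_smul_sq_eq (hZ : ∀ i, MemLp (Z i) 2 μ) {Y : Ω → ℝ}
    (hY : MemLp Y 2 μ) {w : ι → ℝ}
    (hw : ∀ i, ∫ ω, Z i ω * Y ω ∂μ = (secondMomentMatrix μ Z *ᵥ w) i)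
    (hM : (secondMomentMatrix μ Z).PosDef) {v : ι → ℝ}
    (h : ∫ ω, (Y ω - ∑ i, v i * Z i ω) ^ 2 ∂μ = ∫ ω, (Y ω - ∑ i, w i * Z i ω) ^ 2 ∂μ) :
    v = w := by
  rw [integral_sub_sum_smul_sq hZ hY hw v, add_eq_left] at h
  by_contra hvw
  simpa [h] using hM.dotProduct_mulVec_pos (sub_ne_zero.2 hvw)

end LeastSquares

theorem Measurable.measurableSet_setOf_eq {Ω β : Type*} [MeasurableSpace Ω] [MeasurableSpace β]
    [MeasurableSingletonClass β] {T : Ω → β} (hT : Measurable T) (b : β) :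
    MeasurableSet {ω | T ω = b} :=
  hT (measurableSet_singleton b)

theorem ProbabilityTheory.IndepFun.integral_indicator_mul {Ω β γ : Type*} [MeasurableSpace Ω]
    {μ : Measure Ω} [MeasurableSpace β] [MeasurableSingletonClass β] [MeasurableSpace γ]
    {T : Ω → β} {V : Ω → γ} (hTV : ProbabilityTheory.IndepFun T V μ) (hT : Measurable T)
    {ψ : γ → ℝ} (hψ : Measurable ψ) (hψV : AEStronglyMeasurable (fun ω => ψ (V ω)) μ) (b : β) :
    ∫ ω, {ω | T ω = b}.indicator 1 ω * ψ (V ω) ∂μ = μ.real {ω | T ω = b} * ∫ ω, ψ (V ω) ∂μ := by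
  have hind : ProbabilityTheory.IndepFun ({ω | T ω = b}.indicator (1 : Ω → ℝ))
      (fun ω => ψ (V ω)) μ :=
    hTV.comp (measurable_one.indicator (measurableSet_singleton b)) hψ
  have hb := hT.measurableSet_setOf_eq b
  rw [hind.integral_fun_mul_eq_mul_integral (measurable_one.indicator hb).aestronglyMeasurable hψV,
    integral_indicator_one hb]

theorem integral_sub_integral_eq_zero {Ω : Type*} [MeasurableSpace Ω] {μ : Measure Ω}
    [IsZeroOrProbabilityMeasure μ] (f : Ω → ℝ) : ∫ ω, (f ω - ∫ ω', f ω' ∂μ) ∂μ = 0 := by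
  simpa [ProbabilityTheory.centralMoment] using ProbabilityTheory.centralMoment_one (X := f)

theorem integral_sub_integral_mul_sub_const {Ω : Type*} [MeasurableSpace Ω] {μ : Measure Ω}
    [IsProbabilityMeasure μ] {f g : Ω → ℝ} (hf : MemLp f 2 μ) (hg : MemLp g 2 μ) (c : ℝ) :
    ∫ ω, (f ω - ∫ ω', f ω' ∂μ) * (g ω - c) ∂μ = ∫ ω, (f ω - ∫ ω', f ω' ∂μ) * g ω ∂μ := by
  have hfc : MemLp (fun ω => f ω - ∫ ω', f ω' ∂μ) 2 μ := hf.sub (memLp_const _)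
  simp_rw [mul_sub]
  rw [integral_sub (hfc.integrable_fun_mul hg) ((hfc.integrable one_le_two).mul_const c),
    integral_mul_const, integral_sub_integral_eq_zero, zero_mul, sub_zero]

section Ancova

variable {Ω κ ι : Type*} {T : Ω → κ} {X : Ω → ι → ℝ} {Yp : κ → Ω → ℝ}

noncomputable def ancovaFeatures (T : Ω → κ) (X : Ω → ι → ℝ) (m : ι → ℝ) : κ ⊕ ι → Ω → ℝ :=
  Sum.elim (fun t => {ω | T ω = t}.indicator 1) (fun i ω => X ω i - m i)

theorem sum_smul_ancovaFeatures [Fintype κ] [DecidableEq κ] [Fintype ι] (m : ι → ℝ)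
    (ϑ : κ → ℝ) (b : ι → ℝ) (ω : Ω) :
    ∑ j, Sum.elim ϑ b j * ancovaFeatures T X m j ω =
      ϑ ⬝ᵥ (fun t => if T ω = t then 1 else 0) + b ⬝ᵥ (X ω - m) := by
  simp [Fintype.sum_sum_type, ancovaFeatures, dotProduct, Set.indicator_apply]

theorem observed_eq_sum_indicator [Fintype κ] (Yp : κ → Ω → ℝ) (ω : Ω) :
    Yp (T ω) ω = ∑ t, {ω | T ω = t}.indicator (Yp t) ω := by
  rw [Finset.sum_eq_single (T ω)]
  · exact (Set.indicator_of_mem (s := {ω' | T ω' = T ω}) rfl _).symm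
  · exact fun t _ ht => Set.indicator_of_notMem (s := {ω' | T ω' = t}) (Ne.symm ht) _
  · exact fun h => absurd (Finset.mem_univ _) h

section Measure

variable [MeasurableSpace Ω] {μ : Measure Ω} [MeasurableSpace κ] [MeasurableSingletonClass κ]

theorem memLp_ancovaFeatures [IsFiniteMeasure μ] (hT : Measurable T)
    (hX : ∀ i, MemLp (fun ω => X ω i) 2 μ) (m : ι → ℝ) (j : κ ⊕ ι) :
    MemLp (ancovaFeatures T X m j) 2 μ := by
  rcases j with t | i
  · exact (memLp_const 1).indicator (hT.measurableSet_setOf_eq t)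
  · exact (hX i).sub (memLp_const (m i))

theorem secondMomentMatrix_ancovaFeatures [IsProbabilityMeasure μ] [Fintype κ] [DecidableEq κ]
    (hT : Measurable T) (hX : ∀ i, MemLp (fun ω => X ω i) 2 μ)
    (hTX : ProbabilityTheory.IndepFun T X μ) :
    secondMomentMatrix μ (ancovaFeatures T X fun i => ∫ ω, X ω i ∂μ) =
      fromBlocks (diagonal fun t => μ.real {ω | T ω = t}) 0 0
        (secondMomentMatrix μ fun i ω => X ω i - ∫ ω', X ω' i ∂μ) := by
  have hcross : ∀ t i,
      ∫ ω, {ω | T ω = t}.indicator 1 ω * (X ω i - ∫ ω', X ω' i ∂μ) ∂μ = 0 := by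
    intro t i
    rw [hTX.integral_indicator_mul hT (ψ := fun x => x i - ∫ ω', X ω' i ∂μ)
      ((measurable_pi_apply i).sub_const _) ((hX i).sub (memLp_const _)).aestronglyMeasurable t,
      integral_sub_integral_eq_zero, mul_zero]
  ext (t | i) (s | j)
  · have hts : ∀ ω, {ω | T ω = t}.indicator (1 : Ω → ℝ) ω * {ω | T ω = s}.indicator 1 ω =
        ({ω | T ω = t} ∩ {ω | T ω = s}).indicator 1 ω := fun ω => by
      rw [Set.inter_indicator_one]; rfl
    simp only [secondMomentMatrix, ancovaFeatures, Sum.elim_inl, fromBlocks_apply₁₁, hts,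
      diagonal_apply]
    split_ifs with h
    · rw [h, Set.inter_self, integral_indicator_one (hT.measurableSet_setOf_eq s)]
    · have hempty : {ω | T ω = t} ∩ {ω | T ω = s} = ∅ := by
        ext ω
        simp only [Set.mem_inter_iff, Set.mem_ofPred_eq, Set.mem_empty_iff_false, iff_false]
        rintro ⟨rfl, rfl⟩
        exact h rfl
      simp [hempty]
  · exact hcross t j
  · simp only [secondMomentMatrix, ancovaFeatures, Sum.elim_inl, Sum.elim_inr,
      fromBlocks_apply₂₁, Matrix.zero_apply]
    simp_rw [mul_comm (X _ i - _)]
    exact hcross s i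
  · rfl

theorem memLp_observed [Fintype κ] (hT : Measurable T) (hYp : ∀ t, MemLp (Yp t) 2 μ) :
    MemLp (fun ω => Yp (T ω) ω) 2 μ := by
  simp_rw [observed_eq_sum_indicator Yp]
  exact memLp_finsetSum _ fun t _ => (hYp t).indicator (hT.measurableSet_setOf_eq t)

theorem integral_indicator_mul_observed
    (hTV : ProbabilityTheory.IndepFun T (fun ω => (fun t => Yp t ω, X ω)) μ) (hT : Measurable T)
    (hYp : ∀ t, AEStronglyMeasurable (Yp t) μ) (t : κ) :
    ∫ ω, {ω | T ω = t}.indicator 1 ω * Yp (T ω) ω ∂μ =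
      μ.real {ω | T ω = t} * ∫ ω, Yp t ω ∂μ := by
  have hrestrict : ∀ ω, {ω | T ω = t}.indicator (1 : Ω → ℝ) ω * Yp (T ω) ω =
      {ω | T ω = t}.indicator 1 ω * Yp t ω := fun ω => by
    by_cases h : T ω = t <;> simp [h]
  simp_rw [hrestrict]
  exact hTV.integral_indicator_mul hT (ψ := fun z => z.1 t)
    ((measurable_pi_apply t).comp measurable_fst) (hYp t) t

theorem integral_centered_mul_observed [IsFiniteMeasure μ] [Fintype κ]
    (hTV : ProbabilityTheory.IndepFun T (fun ω => (fun t => Yp t ω, X ω)) μ) (hT : Measurable T)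
    (hYp : ∀ t, MemLp (Yp t) 2 μ) (hX : ∀ i, MemLp (fun ω => X ω i) 2 μ) (m : ι → ℝ) (i : ι) :
    ∫ ω, (X ω i - m i) * Yp (T ω) ω ∂μ =
      ∑ t, μ.real {ω | T ω = t} * ∫ ω, (X ω i - m i) * Yp t ω ∂μ := by
  have hXi : MemLp (fun ω => X ω i - m i) 2 μ := (hX i).sub (memLp_const (m i))
  simp_rw [observed_eq_sum_indicator Yp, Finset.mul_sum]
  rw [integral_finsetSum _ fun t _ =>
    hXi.integrable_fun_mul ((hYp t).indicator (hT.measurableSet_setOf_eq t))]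
  refine Finset.sum_congr rfl fun t _ => ?_
  rw [← hTV.integral_indicator_mul hT (ψ := fun z => (z.2 i - m i) * z.1 t)
    ((((measurable_pi_apply i).comp measurable_snd).sub_const _).mul
      ((measurable_pi_apply t).comp measurable_fst))
    (hXi.integrable_fun_mul (hYp t)).aestronglyMeasurable t]
  refine integral_congr_ae (.of_forall fun ω => ?_)
  by_cases h : T ω = t <;> simp [h]

theorem integral_ancovaFeatures_mul_observed [IsProbabilityMeasure μ] [Fintype κ]
    [DecidableEq κ] [Fintype ι] (hTV : ProbabilityTheory.IndepFun T (fun ω => (fun t => Yp t ω, X ω)) μ)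
    (hT : Measurable T) (hYp : ∀ t, MemLp (Yp t) 2 μ) (hX : ∀ i, MemLp (fun ω => X ω i) 2 μ)
    {b : ι → ℝ} (hb : (secondMomentMatrix μ fun i ω => X ω i - ∫ ω', X ω' i ∂μ) *ᵥ b =
      ∑ t, μ.real {ω | T ω = t} • fun i => ∫ ω, (X ω i - ∫ ω', X ω' i ∂μ) * Yp t ω ∂μ)
    (j : κ ⊕ ι) :
    ∫ ω, ancovaFeatures T X (fun i => ∫ ω, X ω i ∂μ) j ω * Yp (T ω) ω ∂μ =
      (secondMomentMatrix μ (ancovaFeatures T X fun i => ∫ ω, X ω i ∂μ) *ᵥ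
        Sum.elim (fun t => ∫ ω, Yp t ω ∂μ) b) j := by
  rw [secondMomentMatrix_ancovaFeatures hT hX (hTV.comp measurable_id measurable_snd),
    fromBlocks_mulVec]
  rcases j with t | i
  · simp [ancovaFeatures, mulVec_diagonal,
      integral_indicator_mul_observed hTV hT (fun t => (hYp t).aestronglyMeasurable)]
  · have hcov := integral_centered_mul_observed hTV hT hYp hX (fun i => ∫ ω, X ω i ∂μ) i
    beta_reduce at hcov
    simp [ancovaFeatures, hcov, hb]

end Measure

end Ancova

/-- Lemma 2(ii), first part: population least squares under the homogeneous (ANCOVA)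
working model uniquely identifies θₜ = E(Y⁽ᵗ⁾) and b = ∑ πₜ βₜ. -/
theorem stmt10 {Ω : Type*} [MeasurableSpace Ω] (μ : Measure Ω) [IsProbabilityMeasure μ]
    (p k : ℕ) (Yp : Fin k → Ω → ℝ) (X : Ω → Fin p → ℝ) (T : Ω → Fin k)
    (hT : Measurable T)
    (hYp : ∀ t, MemLp (Yp t) 2 μ) (hX : ∀ i, MemLp (fun ω => X ω i) 2 μ)
    (A : Ω → Fin k → ℝ) (hA : ∀ ω, A ω = fun t => if T ω = t then 1 else 0)
    (hindep : ProbabilityTheory.IndepFun T (fun ω => (fun t => Yp t ω, X ω)) μ)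
    (π : Fin k → ℝ) (hπ : ∀ t, 0 < π t)
    (hPT : ∀ t, μ {ω | T ω = t} = ENNReal.ofReal (π t))
    (Y : Ω → ℝ) (hY : ∀ ω, Y ω = Yp (T ω) ω)
    (μX : Fin p → ℝ) (hμX : ∀ i, μX i = ∫ ω, X ω i ∂μ)
    (S : Matrix (Fin p) (Fin p) ℝ)
    (hS : ∀ i j, S i j = ∫ ω, (X ω i - μX i) * (X ω j - μX j) ∂μ)
    (hSpd : S.PosDef)
    (β : Fin k → Fin p → ℝ)
    (hβ : ∀ t, β t = S⁻¹.mulVec (fun i => ∫ ω, (X ω i - μX i) * (Yp t ω - ∫ ω', Yp t ω' ∂μ) ∂μ))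
    (θ : Fin k → ℝ) (hθ : ∀ t, θ t = ∫ ω, Yp t ω ∂μ)
    (bstar : Fin p → ℝ) (hbstar : bstar = ∑ t, π t • β t)
    (L : (Fin k → ℝ) → (Fin p → ℝ) → ℝ)
    (hL : ∀ ϑ b, L ϑ b = ∫ ω, (Y ω - ϑ ⬝ᵥ A ω - b ⬝ᵥ (X ω - μX)) ^ 2 ∂μ) :
    (∀ ϑ b, L θ bstar ≤ L ϑ b) ∧
    (∀ ϑ b, L ϑ b = L θ bstar → ϑ = θ ∧ b = bstar) := by
  obtain rfl : μX = fun i => ∫ ω, X ω i ∂μ := funext hμX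
  obtain rfl : Y = fun ω => Yp (T ω) ω := funext hY
  obtain rfl : θ = fun t => ∫ ω, Yp t ω ∂μ := funext hθ
  obtain rfl : S = secondMomentMatrix μ fun i ω => X ω i - ∫ ω', X ω' i ∂μ := funext₂ hS
  set Z := ancovaFeatures T X fun i => ∫ ω, X ω i ∂μ
  have hZ := memLp_ancovaFeatures (μ := μ) hT hX fun i => ∫ ω, X ω i ∂μ
  have hπT : ∀ t, μ.real {ω | T ω = t} = π t := fun t => by
    rw [measureReal_def, hPT, ENNReal.toReal_ofReal (hπ t).le]
  have hGpd : (secondMomentMatrix μ Z).PosDef := by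
    rw [secondMomentMatrix_ancovaFeatures hT hX (hindep.comp measurable_id measurable_snd)]
    simpa only [hπT] using (PosDef.diagonal hπ).fromBlocks_zero hSpd
  have hb : (secondMomentMatrix μ fun i ω => X ω i - ∫ ω', X ω' i ∂μ) *ᵥ bstar =
      ∑ t, μ.real {ω | T ω = t} • fun i => ∫ ω, (X ω i - ∫ ω', X ω' i ∂μ) * Yp t ω ∂μ := by
    simp only [hbstar, mulVec_sum, mulVec_smul, hπT, hβ, mulVec_mulVec,
      mul_nonsing_inv _ hSpd.det_pos.ne'.isUnit, one_mulVec]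
    exact Finset.sum_congr rfl fun t _ => congrArg _ <| funext fun i =>
      integral_sub_integral_mul_sub_const (hX i) (hYp t) _
  have hnormal := integral_ancovaFeatures_mul_observed hindep hT hYp hX hb
  have hLZ : ∀ ϑ b, L ϑ b = ∫ ω, (Yp (T ω) ω - ∑ j, Sum.elim ϑ b j * Z j ω) ^ 2 ∂μ := by
    intro ϑ b
    simp_rw [hL, Z, sum_smul_ancovaFeatures, hA, sub_add_eq_sub_sub]
  refine ⟨fun ϑ b => ?_, fun ϑ b h => ?_⟩
  · simp_rw [hLZ]
    exact integral_sub_sum_smul_sq_le hZ (memLp_observed hT hYp) hnormal hGpd.posSemidef _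
  · simp_rw [hLZ] at h
    have := eq_of_integral_sub_sum_smul_sq_eq hZ (memLp_observed hT hYp) hnormal hGpd h
    exact ⟨funext fun t => congrFun this (.inl t), funext fun i => congrFun this (.inr i)⟩
end

section
/- Under the same setup (A independent of (Y^{(1)},...,Y^{(k)}, X), P(A = a_t) = π_t > 0, Y = ∑_t Y^{(t)} I(A = a_t), square-integrability, Σ_X positive definite), the minimizer of E[(Y − ϑ^T A − ∑_{t=1}^k b_t^T (X − μ_X) I(A = a_t))²] over (ϑ, b_1,...,b_k) is unique and given by ϑ_t = E(Y^{(t)}) and b_t = β_t = Σ_X^{-1} cov(X, Y^{(t)}) for each t. -/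
/-!
Since the arm indicator is independent of `(Y⁽¹⁾, …, Y⁽ᵏ⁾, X)`, the loss splits as
`∑ₜ πₜ E[(Y⁽ᵗ⁾ - ϑₜ - bₜᵀ(X - μ_X))²]`. In arm `t` the residual of `(θₜ, βₜ)` has mean zero and,
by the normal equations `Σ βₜ = cov(X, Y⁽ᵗ⁾)`, is uncorrelated with `X`; so by Pythagoras the arm's
loss exceeds its value at `(θₜ, βₜ)` by `(θₜ - ϑₜ)² + (βₜ - bₜ)ᵀ Σ (βₜ - bₜ)`, which vanishes only
at `(θₜ, βₜ)` because `Σ` is positive definite.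
-/

open Matrix MeasureTheory ProbabilityTheory

section

variable {Ω : Type*} [MeasurableSpace Ω] {μ : Measure Ω}

theorem integral_add_sq_of_integral_mul_eq_zero {f g : Ω → ℝ} (hf : MemLp f 2 μ)
    (hg : MemLp g 2 μ) (hfg : ∫ ω, f ω * g ω ∂μ = 0) :
    ∫ ω, (f ω + g ω) ^ 2 ∂μ = ∫ ω, f ω ^ 2 ∂μ + ∫ ω, g ω ^ 2 ∂μ := by
  have hfg' : Integrable (fun ω => 2 * (f ω * g ω)) μ := (hf.integrable_mul hg).const_mul 2
  have hsq : Integrable (fun ω => f ω ^ 2 + g ω ^ 2) μ := hf.integrable_sq.add hg.integrable_sq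
  simp_rw [add_sq', mul_assoc]
  rw [integral_add hsq hfg',
    integral_add hf.integrable_sq hg.integrable_sq, integral_const_mul, hfg, mul_zero, add_zero]

theorem integral_comp_eq_sum_of_indepFun [IsFiniteMeasure μ] {ι E : Type*} [Fintype ι]
    [MeasurableSpace ι] [MeasurableSingletonClass ι] [MeasurableSpace E] {T : Ω → ι} {V : Ω → E}
    (hT : Measurable T) (hind : IndepFun T V μ) {f : ι → E → ℝ} (hf : ∀ t, Measurable (f t))
    (hfi : ∀ t, Integrable (fun ω => f t (V ω)) μ) :
    ∫ ω, f (T ω) (V ω) ∂μ = ∑ t, μ.real (T ⁻¹' {t}) * ∫ ω, f t (V ω) ∂μ := by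
  classical
  have hsplit : ∀ ω, f (T ω) (V ω) = ∑ t, ({t} : Set ι).indicator 1 (T ω) * f t (V ω) := by
    intro ω
    simp [Set.indicator_apply, eq_comm]
  have hind_t : ∀ t, IndepFun (fun ω => ({t} : Set ι).indicator (1 : ι → ℝ) (T ω))
      (fun ω => f t (V ω)) μ :=
    fun t => hind.comp (measurable_one.indicator (measurableSet_singleton t)) (hf t)
  have hindicator_t : ∀ t, (fun ω => ({t} : Set ι).indicator (1 : ι → ℝ) (T ω)) =
      (T ⁻¹' {t}).indicator 1 := fun t => funext fun ω => (Set.indicator_comp_right T).symm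
  have hint_t : ∀ t, Integrable (fun ω => ({t} : Set ι).indicator (1 : ι → ℝ) (T ω)) μ := by
    intro t
    rw [hindicator_t]
    exact (integrable_const 1).indicator (hT (measurableSet_singleton t))
  have hprod_t : ∀ t, Integrable
      (fun ω => ({t} : Set ι).indicator (1 : ι → ℝ) (T ω) * f t (V ω)) μ :=
    fun t => (hind_t t).integrable_mul (hint_t t) (hfi t)
  simp_rw [hsplit]
  rw [integral_finsetSum _ fun t _ => hprod_t t]
  refine Finset.sum_congr rfl fun t _ => ?_
  rw [(hind_t t).integral_fun_mul_eq_mul_integral (hint_t t).aestronglyMeasurable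
    (hfi t).aestronglyMeasurable, hindicator_t, integral_indicator_one (hT (measurableSet_singleton t))]

end

section

variable {Ω ι : Type*} [MeasurableSpace Ω] {μ : Measure Ω} [Fintype ι] {W : Ω → ι → ℝ}

theorem memLp_dotProduct {q : ENNReal} (v : ι → ℝ) (hW : ∀ i, MemLp (fun ω => W ω i) q μ) :
    MemLp (fun ω => v ⬝ᵥ W ω) q μ :=
  memLp_finsetSum _ fun i _ => (hW i).const_mul (v i)

theorem integral_dotProduct (v : ι → ℝ) (hW : ∀ i, Integrable (fun ω => W ω i) μ) :
    ∫ ω, v ⬝ᵥ W ω ∂μ = v ⬝ᵥ fun i => ∫ ω, W ω i ∂μ := by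
  simp only [dotProduct]
  rw [integral_finsetSum _ fun i _ => (hW i).const_mul (v i)]
  simp only [integral_const_mul]

theorem integral_dotProduct_mul (v : ι → ℝ) (hW : ∀ i, MemLp (fun ω => W ω i) 2 μ)
    {Z : Ω → ℝ} (hZ : MemLp Z 2 μ) :
    ∫ ω, (v ⬝ᵥ W ω) * Z ω ∂μ = v ⬝ᵥ fun i => ∫ ω, W ω i * Z ω ∂μ := by
  have hWZ : ∀ ω, (v ⬝ᵥ W ω) * Z ω = v ⬝ᵥ fun i => W ω i * Z ω := fun ω => by
    simp only [dotProduct, Finset.sum_mul, mul_assoc]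
  simp_rw [hWZ]
  exact integral_dotProduct v fun i => (hW i).integrable_mul hZ

variable {S : Matrix ι ι ℝ}

theorem integral_mul_dotProduct (hW : ∀ i, MemLp (fun ω => W ω i) 2 μ)
    (hS : ∀ i j, S i j = ∫ ω, W ω i * W ω j ∂μ) (v : ι → ℝ) (i : ι) :
    ∫ ω, W ω i * (v ⬝ᵥ W ω) ∂μ = (S *ᵥ v) i := by
  simp_rw [mul_comm (W _ i), integral_dotProduct_mul v hW (hW i)]
  rw [mulVec, dotProduct_comm]
  congr 1
  funext j
  simp only [hS, mul_comm]

theorem integral_dotProduct_sq (hW : ∀ i, MemLp (fun ω => W ω i) 2 μ)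
    (hS : ∀ i j, S i j = ∫ ω, W ω i * W ω j ∂μ) (v : ι → ℝ) :
    ∫ ω, (v ⬝ᵥ W ω) ^ 2 ∂μ = v ⬝ᵥ S *ᵥ v := by
  simp_rw [sq, integral_dotProduct_mul v hW (memLp_dotProduct v hW),
    integral_mul_dotProduct hW hS]

theorem integral_sub_sub_dotProduct_sq_of_mulVec_eq [IsProbabilityMeasure μ] {Z : Ω → ℝ}
    (hZ : MemLp Z 2 μ) (hW : ∀ i, MemLp (fun ω => W ω i) 2 μ) (hW0 : ∀ i, ∫ ω, W ω i ∂μ = 0)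
    (hS : ∀ i j, S i j = ∫ ω, W ω i * W ω j ∂μ) {θ : ℝ} (hθ : θ = ∫ ω, Z ω ∂μ) {β : ι → ℝ}
    (hβ : S *ᵥ β = fun i => ∫ ω, W ω i * (Z ω - θ) ∂μ) (a : ℝ) (v : ι → ℝ) :
    ∫ ω, (Z ω - a - v ⬝ᵥ W ω) ^ 2 ∂μ =
      ∫ ω, (Z ω - θ - β ⬝ᵥ W ω) ^ 2 ∂μ + ((θ - a) ^ 2 + (β - v) ⬝ᵥ S *ᵥ (β - v)) := by
  have hZθ : MemLp (fun ω => Z ω - θ) 2 μ := hZ.sub (memLp_const θ)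
  have hR : MemLp (fun ω => Z ω - θ - β ⬝ᵥ W ω) 2 μ := hZθ.sub (memLp_dotProduct β hW)
  have hU : MemLp (fun ω => (θ - a) + (β - v) ⬝ᵥ W ω) 2 μ :=
    (memLp_const (θ - a)).add (memLp_dotProduct (β - v) hW)
  have hmean_dot : ∀ d : ι → ℝ, ∫ ω, d ⬝ᵥ W ω ∂μ = 0 := fun d => by
    simp [integral_dotProduct d fun i => (hW i).integrable one_le_two, hW0]
  have hR_mean : ∫ ω, (Z ω - θ - β ⬝ᵥ W ω) ∂μ = 0 := by
    rw [integral_sub (hZθ.integrable one_le_two) ((memLp_dotProduct β hW).integrable one_le_two),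
      integral_sub (hZ.integrable one_le_two) (integrable_const θ), hmean_dot, ← hθ]
    simp
  have hR_orth : ∀ i, ∫ ω, W ω i * (Z ω - θ - β ⬝ᵥ W ω) ∂μ = 0 := fun i => by
    have h₁ : Integrable (fun ω => W ω i * (Z ω - θ)) μ := (hW i).integrable_mul hZθ
    have h₂ : Integrable (fun ω => W ω i * (β ⬝ᵥ W ω)) μ :=
      (hW i).integrable_mul (memLp_dotProduct β hW)
    simp_rw [mul_sub (W _ i) (Z _ - θ)]
    rw [integral_sub h₁ h₂, integral_mul_dotProduct hW hS, hβ, sub_self]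
  have hRU : ∫ ω, (Z ω - θ - β ⬝ᵥ W ω) * ((θ - a) + (β - v) ⬝ᵥ W ω) ∂μ = 0 := by
    have h₁ : Integrable (fun ω => (θ - a) * (Z ω - θ - β ⬝ᵥ W ω)) μ :=
      (hR.integrable one_le_two).const_mul _
    have h₂ : Integrable (fun ω => (β - v) ⬝ᵥ W ω * (Z ω - θ - β ⬝ᵥ W ω)) μ :=
      (memLp_dotProduct _ hW).integrable_mul hR
    simp_rw [mul_add, mul_comm (Z _ - θ - β ⬝ᵥ W _)]
    rw [integral_add h₁ h₂, integral_const_mul, hR_mean, integral_dotProduct_mul _ hW hR]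
    simp [hR_orth]
  have hU_sq : ∫ ω, ((θ - a) + (β - v) ⬝ᵥ W ω) ^ 2 ∂μ =
      (θ - a) ^ 2 + (β - v) ⬝ᵥ S *ᵥ (β - v) := by
    rw [integral_add_sq_of_integral_mul_eq_zero (memLp_const _) (memLp_dotProduct _ hW)
      (by rw [integral_const_mul, hmean_dot, mul_zero]), integral_dotProduct_sq hW hS]
    simp
  have hdecomp : ∀ ω, Z ω - a - v ⬝ᵥ W ω =
      (Z ω - θ - β ⬝ᵥ W ω) + ((θ - a) + (β - v) ⬝ᵥ W ω) := fun ω => by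
    rw [sub_dotProduct]; ring
  simp_rw [hdecomp]
  rw [integral_add_sq_of_integral_mul_eq_zero hR hU hRU, hU_sq]

end

section

variable {ι κ : Type*} [Fintype ι] [Fintype κ] {S : Matrix ι ι ℝ} {w : κ → ℝ}

theorem sum_mul_sq_add_dotProduct_mulVec_nonneg (hS : S.PosSemidef) (hw : ∀ t, 0 ≤ w t)
    (c : κ → ℝ) (d : κ → ι → ℝ) : 0 ≤ ∑ t, w t * (c t ^ 2 + d t ⬝ᵥ S *ᵥ d t) :=
  Finset.sum_nonneg fun t _ => mul_nonneg (hw t)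
    (add_nonneg (sq_nonneg _) (by simpa using hS.dotProduct_mulVec_nonneg (d t)))

theorem eq_zero_of_sum_mul_sq_add_dotProduct_mulVec_eq_zero (hS : S.PosDef) (hw : ∀ t, 0 < w t)
    {c : κ → ℝ} {d : κ → ι → ℝ} (h : ∑ t, w t * (c t ^ 2 + d t ⬝ᵥ S *ᵥ d t) = 0) :
    c = 0 ∧ d = 0 := by
  have hquad_nonneg : ∀ t, 0 ≤ d t ⬝ᵥ S *ᵥ d t := fun t => by
    simpa using hS.posSemidef.dotProduct_mulVec_nonneg (d t)
  have hterm_nonneg : ∀ t, 0 ≤ w t * (c t ^ 2 + d t ⬝ᵥ S *ᵥ d t) := fun t =>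
    mul_nonneg (hw t).le (add_nonneg (sq_nonneg _) (hquad_nonneg t))
  rw [Finset.sum_eq_zero_iff_of_nonneg fun t _ => hterm_nonneg t] at h
  have hterm : ∀ t, c t ^ 2 + d t ⬝ᵥ S *ᵥ d t = 0 := fun t =>
    (mul_eq_zero.1 (h t (Finset.mem_univ t))).resolve_left (hw t).ne'
  have hboth : ∀ t, c t ^ 2 = 0 ∧ d t ⬝ᵥ S *ᵥ d t = 0 := fun t =>
    (add_eq_zero_iff_of_nonneg (sq_nonneg _) (hquad_nonneg t)).1 (hterm t)
  refine ⟨funext fun t => (pow_eq_zero_iff two_ne_zero).1 (hboth t).1, funext fun t => ?_⟩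
  by_contra hdt
  simpa [(hboth t).2] using hS.dotProduct_mulVec_pos hdt

end

/-- Lemma 2(ii), second part: population least squares under the heterogeneous (ANHECOVA)
working model uniquely identifies θₜ = E(Y⁽ᵗ⁾) and bₜ = βₜ = Σ⁻¹cov(X, Y⁽ᵗ⁾). -/
theorem stmt11 {Ω : Type*} [MeasurableSpace Ω] (μ : Measure Ω) [IsProbabilityMeasure μ]
    (p k : ℕ) (Yp : Fin k → Ω → ℝ) (X : Ω → Fin p → ℝ) (T : Ω → Fin k)
    (hT : Measurable T)
    (hYp : ∀ t, MemLp (Yp t) 2 μ) (hX : ∀ i, MemLp (fun ω => X ω i) 2 μ)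
    (A : Ω → Fin k → ℝ) (hA : ∀ ω, A ω = fun t => if T ω = t then 1 else 0)
    (hindep : ProbabilityTheory.IndepFun T (fun ω => (fun t => Yp t ω, X ω)) μ)
    (π : Fin k → ℝ) (hπ : ∀ t, 0 < π t)
    (hPT : ∀ t, μ {ω | T ω = t} = ENNReal.ofReal (π t))
    (Y : Ω → ℝ) (hY : ∀ ω, Y ω = Yp (T ω) ω)
    (μX : Fin p → ℝ) (hμX : ∀ i, μX i = ∫ ω, X ω i ∂μ)
    (S : Matrix (Fin p) (Fin p) ℝ)
    (hS : ∀ i j, S i j = ∫ ω, (X ω i - μX i) * (X ω j - μX j) ∂μ)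
    (hSpd : S.PosDef)
    (β : Fin k → Fin p → ℝ)
    (hβ : ∀ t, β t = S⁻¹.mulVec (fun i => ∫ ω, (X ω i - μX i) * (Yp t ω - ∫ ω', Yp t ω' ∂μ) ∂μ))
    (θ : Fin k → ℝ) (hθ : ∀ t, θ t = ∫ ω, Yp t ω ∂μ)
    (L : (Fin k → ℝ) → (Fin k → Fin p → ℝ) → ℝ)
    (hL : ∀ ϑ b, L ϑ b = ∫ ω, (Y ω - ϑ ⬝ᵥ A ω
        - ∑ t, (b t ⬝ᵥ (X ω - μX)) * (if T ω = t then 1 else 0)) ^ 2 ∂μ) :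
    (∀ ϑ b, L θ β ≤ L ϑ b) ∧
    (∀ ϑ b, L ϑ b = L θ β → ϑ = θ ∧ b = β) := by
  set W : Ω → Fin p → ℝ := fun ω => X ω - μX
  have hW : ∀ i, MemLp (fun ω => W ω i) 2 μ := fun i => (hX i).sub (memLp_const (μX i))
  have hW0 : ∀ i, ∫ ω, W ω i ∂μ = 0 := fun i => by
    simp [W, integral_sub ((hX i).integrable one_le_two) (integrable_const _), hμX]
  have hnormal : ∀ t, S *ᵥ β t = fun i => ∫ ω, W ω i * (Yp t ω - θ t) ∂μ := fun t => by
    rw [hβ t, mulVec_mulVec, mul_nonsing_inv S (S.isUnit_iff_isUnit_det.1 hSpd.isUnit),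
      one_mulVec, hθ t]
    rfl
  have hπ_real : ∀ t, μ.real (T ⁻¹' {t}) = π t := fun t => by
    rw [measureReal_def, ← ENNReal.toReal_ofReal (hπ t).le, ← hPT t]
    rfl
  have harms : ∀ ϑ b, L ϑ b = ∑ t, π t * ∫ ω, (Yp t ω - ϑ t - b t ⬝ᵥ W ω) ^ 2 ∂μ := by
    intro ϑ b
    have key := integral_comp_eq_sum_of_indepFun hT hindep
      (f := fun t (q : (Fin k → ℝ) × (Fin p → ℝ)) => (q.1 t - ϑ t - b t ⬝ᵥ (q.2 - μX)) ^ 2)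
      (fun t => by fun_prop)
      (fun t => (((hYp t).sub (memLp_const (ϑ t))).sub (memLp_dotProduct (b t) hW)).integrable_sq)
    simp only [hπ_real] at key
    rw [hL, ← key]
    congr 1
    funext ω
    simp [hA, hY, dotProduct]
  have hexcess : ∀ ϑ b, L ϑ b = L θ β +
      ∑ t, π t * ((θ - ϑ) t ^ 2 + (β - b) t ⬝ᵥ S *ᵥ (β - b) t) := by
    intro ϑ b
    rw [harms, harms, ← Finset.sum_add_distrib]
    refine Finset.sum_congr rfl fun t _ => ?_
    rw [integral_sub_sub_dotProduct_sq_of_mulVec_eq (hYp t) hW hW0 hS (hθ t) (hnormal t), mul_add]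
    rfl
  refine ⟨fun ϑ b => ?_, fun ϑ b h => ?_⟩
  · rw [hexcess ϑ b]
    exact le_add_of_nonneg_right
      (sum_mul_sq_add_dotProduct_mulVec_nonneg hSpd.posSemidef (fun t => (hπ t).le) _ _)
  · rw [hexcess ϑ b, add_eq_left] at h
    obtain ⟨hϑ, hb⟩ := eq_zero_of_sum_mul_sq_add_dotProduct_mulVec_eq_zero hSpd hπ h
    exact ⟨(sub_eq_zero.1 hϑ).symm, (sub_eq_zero.1 hb).symm⟩
end

section
/- Let Σ be symmetric positive semidefinite, β_t, β_s, β ∈ ℝ^p, π_t, π_s > 0 with π_t + π_s ≤ 1. Suppose the quantity π_t^{-1}(β_t − β)^T Σ (β_t − β) + π_s^{-1}(β_s − β)^T Σ (β_s − β) − (β_t − β_s)^T Σ (β_t − β_s) = 0 and Σ is positive definite. Then β = (π_s β_t + π_t β_s)/(π_t + π_s) and (1 − π_t − π_s)(β_t − β_s) = 0. -/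
/-!
Put `u = βₜ - β`, `v = βₛ - β` and `Q x = xᵀ Σ x`. Multiplying the gap by `πₜ πₛ (πₜ + πₛ)`
turns it into `Q (πₛ u + πₜ v) + πₜ πₛ (1 - πₜ - πₛ) Q (u - v)`, a sum of two nonnegative
terms. If the gap vanishes both terms vanish, and positive definiteness of `Q` gives
`πₛ u + πₜ v = 0` and `(1 - πₜ - πₛ) (u - v) = 0`.
-/

open Matrix

namespace QuadraticMap

variable {M : Type*} [AddCommGroup M]

theorem map_smul_add_smul_add_mul_map_sub {R : Type*} [CommRing R] [Module R M]
    (Q : QuadraticMap R M R) (a b : R) (u v : M) :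
    Q (b • u + a • v) + a * b * (1 - a - b) * Q (u - v) =
      (a + b) * (b * Q u + a * Q v - a * b * Q (u - v)) := by
  have hsum : Q (b • u + a • v) = b * b * Q u + a * a * Q v + b * a * polar Q u v := by
    rw [QuadraticMap.map_add Q, Q.map_smul, Q.map_smul, polar_smul_left, polar_smul_right]
    simp only [smul_eq_mul]
    ring
  have hdiff : Q (u - v) = Q u + Q v - polar Q u v := by
    rw [sub_eq_add_neg, QuadraticMap.map_add Q, Q.map_neg, polar_neg_right, ← sub_eq_add_neg]
  rw [hsum, hdiff]
  ring

theorem smul_add_smul_eq_zero_of_inv_mul_add_inv_mul_sub_eq_zero {K : Type*} [Field K]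
    [LinearOrder K] [IsStrictOrderedRing K] [Module K M] {Q : QuadraticMap K M K}
    (hQ : Q.PosDef) {a b : K} (ha : 0 < a) (hb : 0 < b) (hab : a + b ≤ 1) {u v : M}
    (h : a⁻¹ * Q u + b⁻¹ * Q v - Q (u - v) = 0) :
    b • u + a • v = 0 ∧ (1 - a - b) • (u - v) = 0 := by
  have hcleared : b * Q u + a * Q v - a * b * Q (u - v) = 0 := by
    field_simp at h
    linear_combination h
  have hcoef : 0 ≤ a * b * (1 - a - b) := mul_nonneg (by positivity) (by linarith)
  have key := Q.map_smul_add_smul_add_mul_map_sub a b u v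
  rw [hcleared, mul_zero] at key
  obtain ⟨h₁, h₂⟩ :=
    (add_eq_zero_iff_of_nonneg (hQ.nonneg _) (mul_nonneg hcoef (hQ.nonneg (u - v)))).mp key
  have h₂' : (1 - a - b) * Q (u - v) = 0 := by
    rw [mul_assoc] at h₂
    exact (mul_eq_zero.mp h₂).resolve_left (by positivity)
  refine ⟨hQ.anisotropic _ h₁, hQ.anisotropic _ ?_⟩
  rw [Q.map_smul, smul_eq_mul, mul_assoc, h₂', mul_zero]

end QuadraticMap

theorem Matrix.toQuadraticForm'_apply {n R : Type*} [Fintype n] [DecidableEq n] [CommRing R]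
    (S : Matrix n n R) (x : n → R) : S.toQuadraticForm' x = x ⬝ᵥ S *ᵥ x := by
  simp [toQuadraticForm', toLinearMap₂'_apply']

theorem stmt13_general (p : ℕ) (S : Matrix (Fin p) (Fin p) ℝ)
    (βt βs β : Fin p → ℝ) (πt πs : ℝ) (hπt : 0 < πt) (hπs : 0 < πs) (hsum : πt + πs ≤ 1)
    (hzero : πt⁻¹ * ((βt - β) ⬝ᵥ S.mulVec (βt - β))
        + πs⁻¹ * ((βs - β) ⬝ᵥ S.mulVec (βs - β))
        - (βt - βs) ⬝ᵥ S.mulVec (βt - βs) = 0)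
    (hSpd : S.PosDef) :
    β = (πt + πs)⁻¹ • (πs • βt + πt • βs) ∧ (1 - πt - πs) • (βt - βs) = 0 := by
  have hgap : πt⁻¹ * S.toQuadraticForm' (βt - β) + πs⁻¹ * S.toQuadraticForm' (βs - β)
      - S.toQuadraticForm' ((βt - β) - (βs - β)) = 0 := by
    simpa only [toQuadraticForm'_apply, sub_sub_sub_cancel_right] using hzero
  obtain ⟨hβ, hdiff⟩ := QuadraticMap.smul_add_smul_eq_zero_of_inv_mul_add_inv_mul_sub_eq_zero
    hSpd.toQuadraticForm' hπt hπs hsum hgap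
  refine ⟨?_, by rwa [sub_sub_sub_cancel_right] at hdiff⟩
  rw [eq_inv_smul_iff₀ (by positivity)]
  linear_combination (norm := module) -hβ

/-- Equality characterization (Corollary 1(ii)): zero efficiency gap forces
β = (πₛβₜ + πₜβₛ)/(πₜ+πₛ) and (1−πₜ−πₛ)(βₜ−βₛ) = 0. -/
theorem stmt13 (p : ℕ) (S : Matrix (Fin p) (Fin p) ℝ) (hS : S.PosSemidef)
    (βt βs β : Fin p → ℝ) (πt πs : ℝ) (hπt : 0 < πt) (hπs : 0 < πs) (hsum : πt + πs ≤ 1)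
    (hzero : πt⁻¹ * ((βt - β) ⬝ᵥ S.mulVec (βt - β))
        + πs⁻¹ * ((βs - β) ⬝ᵥ S.mulVec (βs - β))
        - (βt - βs) ⬝ᵥ S.mulVec (βt - βs) = 0)
    (hSpd : S.PosDef) :
    β = (πt + πs)⁻¹ • (πs • βt + πt • βs) ∧ (1 - πt - πs) • (βt - βs) = 0 :=
  stmt13_general p S βt βs β πt πs hπt hπs hsum hzero hSpd
end
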